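/- Suppose an m×m matrix X satisfies (i) 𝒢(X) ≥ 0, (ii) 0 ≤ X ≤ G, and (iii) I − Σ_{v=1}^{N} Σ_{j=0}^{v-1} (X^{v-1-j})ᵀ ⊗ (A_v X^{j}) is a nonsingular M-matrix. Let Z be an m×m matrix with 0 ≤ Z ≤ X, and let Y be an m×m matrix satisfying Σ_{v=1}^{N} Σ_{j=0}^{v-1} A_v Z^{j} (Y − X) Z^{v-1-j} − (Y − X) = −𝒢(X). Then 0 ≤ X ≤ Y ≤ G. -/

import Mathlib

open Matrix Finset Kronecker
open scoped ENNReal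

/-- Spectral radius of a real matrix: the spectral radius of its complexification. -/
noncomputable def specRad {n : Type*} [Fintype n] [DecidableEq n] (B : Matrix n n ℝ) : ℝ≥0∞ :=
  spectralRadius ℂ (B.map (algebraMap ℝ ℂ))

/-- `M` is a nonsingular M-matrix: a Z-matrix of the form `s • I - B` with `B ≥ 0`
entrywise and `s` greater than the spectral radius of `B`. -/
def IsNonsingMMatrix {n : Type*} [Fintype n] [DecidableEq n] (M : Matrix n n ℝ) : Prop :=
  (∀ i j, i ≠ j → M i j ≤ 0) ∧
  ∃ s : ℝ, ∃ B : Matrix n n ℝ, (∀ i j, 0 ≤ B i j) ∧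
    M = s • (1 : Matrix n n ℝ) - B ∧ specRad B < ENNReal.ofReal s


section AuxiliaryLemmas

open Filter
open scoped NNReal Topology

attribute [local instance] Matrix.linftyOpNormedRing Matrix.linftyOpNormedAlgebra

set_option linter.unusedSectionVars false
set_option linter.unusedVariables false
section Aux
variable {ι : Type*} [Fintype ι] [DecidableEq ι] [Nonempty ι]

lemma norm_le_entrySum (M : Matrix ι ι ℂ) : ‖M‖ ≤ ∑ p, ∑ q, ‖M p q‖ := by
  have h : ‖M‖₊ ≤ ∑ p, ∑ q, ‖M p q‖₊ := by
    rw [Matrix.linfty_opNNNorm_def]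
    refine Finset.sup_le fun i _ => ?_
    exact Finset.single_le_sum (f := fun p => ∑ q, ‖M p q‖₊) (fun p _ => zero_le) (mem_univ i)
  calc ‖M‖ = ((‖M‖₊ : ℝ)) := rfl
    _ ≤ ((∑ p, ∑ q, ‖M p q‖₊ : ℝ≥0) : ℝ) := by exact_mod_cast h
    _ = ∑ p, ∑ q, ‖M p q‖ := by push_cast; rfl

lemma entrySum_le_card_norm (M : Matrix ι ι ℂ) :
    ∑ p, ∑ q, ‖M p q‖ ≤ (Fintype.card ι : ℝ) * ‖M‖ := by
  have hrow : ∀ p : ι, ∑ q, ‖M p q‖ ≤ ‖M‖ := by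
    intro p
    have h : (∑ q, ‖M p q‖₊ : ℝ≥0) ≤ ‖M‖₊ := by
      rw [Matrix.linfty_opNNNorm_def]
      exact Finset.le_sup (f := fun i => ∑ j, ‖M i j‖₊) (mem_univ p)
    calc ∑ q, ‖M p q‖ = ((∑ q, ‖M p q‖₊ : ℝ≥0) : ℝ) := by push_cast; rfl
      _ ≤ ‖M‖ := by exact_mod_cast h
  calc ∑ p, ∑ q, ‖M p q‖ ≤ ∑ _p : ι, ‖M‖ := Finset.sum_le_sum fun p _ => hrow p
    _ = (Fintype.card ι : ℝ) * ‖M‖ := by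
        rw [Finset.sum_const, nsmul_eq_mul, Fintype.card]

lemma entry_norm_le (M : Matrix ι ι ℂ) (i j : ι) : ‖M i j‖ ≤ ‖M‖ := by
  have h : ‖M i j‖₊ ≤ ‖M‖₊ := by
    rw [Matrix.linfty_opNNNorm_def]
    calc ‖M i j‖₊ ≤ ∑ q, ‖M i q‖₊ :=
          Finset.single_le_sum (f := fun q => ‖M i q‖₊) (fun q _ => zero_le) (mem_univ j)
      _ ≤ _ := Finset.le_sup (f := fun i => ∑ q, ‖M i q‖₊) (mem_univ i)
  exact_mod_cast h

noncomputable def matSum (Q : Matrix ι ι ℝ) : ℝ := ∑ p, ∑ q, Q p q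

lemma matSum_sum {s : Finset ℕ} (f : ℕ → Matrix ι ι ℝ) :
    matSum (∑ k ∈ s, f k) = ∑ k ∈ s, matSum (f k) := by
  simp only [matSum, Matrix.sum_apply]
  trans (∑ p, ∑ k ∈ s, ∑ q, f k p q)
  · exact Finset.sum_congr rfl fun p _ => Finset.sum_comm
  · exact Finset.sum_comm

lemma matSum_smul (c : ℝ) (M : Matrix ι ι ℝ) : matSum (c • M) = c * matSum M := by
  simp [matSum, Matrix.smul_apply, Finset.mul_sum]

lemma term_eq (Q : Matrix ι ι ℝ) (t : ℝ) (n k : ℕ) :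
    Q ^ k * (t • (1 : Matrix ι ι ℝ)) ^ (n - k) * (n.choose k : Matrix ι ι ℝ) =
      ((n.choose k : ℝ) * t ^ (n - k)) • Q ^ k := by
  rw [smul_pow, one_pow, mul_smul_comm, mul_one]
  rw [(Nat.cast_commute (n.choose k) (t ^ (n-k) • Q ^ k)).eq.symm, ← nsmul_eq_mul,
    ← Nat.cast_smul_eq_nsmul ℝ, smul_smul]

lemma matSum_pow_expand (Q : Matrix ι ι ℝ) (t : ℝ) (n : ℕ) :
    matSum ((Q + t • 1) ^ n) =
      ∑ k ∈ Finset.range (n + 1), (n.choose k : ℝ) * t ^ (n - k) * matSum (Q ^ k) := by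
  have hc : Commute Q (t • (1 : Matrix ι ι ℝ)) := by
    simpa using (Commute.one_right Q).smul_right t
  rw [hc.add_pow, matSum_sum]
  refine Finset.sum_congr rfl fun k _ => ?_
  rw [term_eq, matSum_smul, mul_assoc]

lemma map_pow_comm (Q : Matrix ι ι ℝ) (n : ℕ) :
    (Q ^ n).map (algebraMap ℝ ℂ) = (Q.map (algebraMap ℝ ℂ)) ^ n := by
  simpa only [RingHom.mapMatrix_apply] using map_pow ((algebraMap ℝ ℂ).mapMatrix) Q n

lemma entrySum_map (Q : Matrix ι ι ℝ) (hQ : ∀ p q, 0 ≤ Q p q) :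
    ∑ p, ∑ q, ‖(Q.map (algebraMap ℝ ℂ)) p q‖ = matSum Q := by
  unfold matSum
  refine Finset.sum_congr rfl fun p _ => Finset.sum_congr rfl fun q _ => ?_
  simp only [Matrix.map_apply, Complex.coe_algebraMap, Complex.norm_real]
  exact (Real.norm_of_nonneg (hQ p q))

lemma mul_entry_nonneg {P Q : Matrix ι ι ℝ} (hP : ∀ p q, 0 ≤ P p q) (hQ : ∀ p q, 0 ≤ Q p q) :
    ∀ p q, 0 ≤ (P * Q) p q := fun p q =>
  Finset.sum_nonneg fun k _ => mul_nonneg (hP p k) (hQ k q)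

lemma pow_entry_nonneg {Q : Matrix ι ι ℝ} (hQ : ∀ p q, 0 ≤ Q p q) (n : ℕ) :
    ∀ p q, 0 ≤ (Q ^ n) p q := by
  induction n with
  | zero => intro p q; rw [pow_zero]; by_cases h : p = q <;> simp [Matrix.one_apply, h]
  | succ n ih => rw [pow_succ]; exact mul_entry_nonneg ih hQ

end Aux

section SpectralCore
variable {ι : Type*} [Fintype ι] [DecidableEq ι] [Nonempty ι]

lemma specRad_add_smul_le (B : Matrix ι ι ℝ) (c : ℝ) (hc : 0 ≤ c)
    (hfin : specRad B ≠ ⊤) :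
    specRad (B + c • 1) ≤ ENNReal.ofReal ((specRad B).toReal + c) := by
  set ρ : ℝ := (specRad B).toReal with hρ
  have hmap : (B + c • 1).map (algebraMap ℝ ℂ) =
      algebraMap ℂ (Matrix ι ι ℂ) (c : ℂ) + B.map (algebraMap ℝ ℂ) := by
    rw [Algebra.algebraMap_eq_smul_one]
    ext i j
    by_cases h : i = j <;>
      simp [Matrix.map_apply, Matrix.add_apply, Matrix.smul_apply, Matrix.one_apply, h,
        add_comm]
  rw [specRad, hmap, spectralRadius]
  refine iSup₂_le fun k hk => ?_
  rw [← spectrum.singleton_add_eq] at hk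
  obtain ⟨x, hx, μ, hμ, rfl⟩ := Set.mem_add.mp hk
  rw [Set.mem_singleton_iff] at hx
  subst hx
  have hμn : ‖μ‖ ≤ ρ := by
    have h1 : (‖μ‖₊ : ℝ≥0∞) ≤ specRad B := le_iSup₂ (α := ℝ≥0∞) μ hμ
    have h2 : specRad B = ENNReal.ofReal ρ := by
      rw [hρ, ENNReal.ofReal_toReal hfin]
    rw [h2, ← enorm_eq_nnnorm, ← ofReal_norm] at h1
    exact (ENNReal.ofReal_le_ofReal_iff ENNReal.toReal_nonneg).mp h1
  rw [← enorm_eq_nnnorm, ← ofReal_norm]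
  refine ENNReal.ofReal_le_ofReal ?_
  calc ‖(c : ℂ) + μ‖ ≤ ‖(c : ℂ)‖ + ‖μ‖ := norm_add_le _ _
    _ ≤ c + ρ := by
        rw [Complex.norm_real, Real.norm_of_nonneg hc]
        linarith
    _ = ρ + c := by ring

lemma one_le_norm_pow_of_one_le_specRad (Q : Matrix ι ι ℝ) (h1 : 1 ≤ specRad Q) (n : ℕ) :
    (1 : ℝ) ≤ ‖(Q.map (algebraMap ℝ ℂ)) ^ (n + 1)‖ := by
  set a := Q.map (algebraMap ℝ ℂ)
  have hle : spectralRadius ℂ a ≤ (‖a ^ (n + 1)‖₊ : ℝ≥0∞) ^ (1 / (n + 1) : ℝ) := by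
    have h := spectrum.spectralRadius_le_pow_nnnorm_pow_one_div ℂ a n
    simpa using h
  have h2 : (1 : ℝ≥0∞) ≤ (‖a ^ (n + 1)‖₊ : ℝ≥0∞) := by
    by_contra hlt
    push_neg at hlt
    have := ENNReal.rpow_lt_one hlt (by positivity : (0:ℝ) < 1 / (n + 1))
    exact absurd (lt_of_le_of_lt (h1.trans hle) this) (lt_irrefl _)
  have h3 : (1 : ℝ≥0) ≤ ‖a ^ (n + 1)‖₊ := ENNReal.one_le_coe_iff.mp h2
  exact_mod_cast h3

lemma norm_pow_le_of_gelfand (b : Matrix ι ι ℂ) (ρ' : ℝ) (hρ'0 : 0 ≤ ρ') (n : ℕ) (hn : 1 ≤ n)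
    (h : (‖b ^ n‖₊ : ℝ≥0∞) ^ (1 / n : ℝ) < ENNReal.ofReal ρ') : ‖b ^ n‖ ≤ ρ' ^ n := by
  have hn' : (n : ℝ) ≠ 0 := by
    have : 0 < n := hn
    exact_mod_cast this.ne'
  have hx : (‖b ^ n‖₊ : ℝ≥0∞) = ((‖b ^ n‖₊ : ℝ≥0∞) ^ (1 / n : ℝ)) ^ (n : ℕ) := by
    rw [← ENNReal.rpow_natCast (((‖b ^ n‖₊ : ℝ≥0∞)) ^ (1 / n : ℝ)) n, ← ENNReal.rpow_mul,
      one_div, inv_mul_cancel₀ hn', ENNReal.rpow_one]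
  have h2 : (‖b ^ n‖₊ : ℝ≥0∞) ≤ ENNReal.ofReal (ρ' ^ n) := by
    rw [hx]
    calc ((‖b ^ n‖₊ : ℝ≥0∞) ^ (1 / n : ℝ)) ^ (n : ℕ) ≤ (ENNReal.ofReal ρ') ^ (n : ℕ) :=
          pow_le_pow_left' h.le n
      _ = ENNReal.ofReal (ρ' ^ n) := (ENNReal.ofReal_pow hρ'0 n).symm
  rw [← enorm_eq_nnnorm, ← ofReal_norm] at h2
  exact (ENNReal.ofReal_le_ofReal_iff (by positivity)).mp h2

lemma specRad_lt_one (Q : Matrix ι ι ℝ) (hQ0 : ∀ p q, 0 ≤ Q p q)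
    (s : ℝ) (B : Matrix ι ι ℝ) (hB0 : ∀ i j, 0 ≤ B i j)
    (hEq : (1 : Matrix ι ι ℝ) - Q = s • 1 - B) (hs : specRad B < ENNReal.ofReal s) :
    specRad Q < 1 := by
  have hfin : specRad B ≠ ⊤ := hs.ne_top
  have hs0 : 0 < s := by
    have h0 : (0 : ℝ≥0∞) < ENNReal.ofReal s := lt_of_le_of_lt zero_le hs
    exact ENNReal.ofReal_pos.mp h0
  have hB : B = Q + (s - 1) • 1 := by
    have h1 : B = s • (1 : Matrix ι ι ℝ) - ((1 : Matrix ι ι ℝ) - Q) := by rw [hEq]; abel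
    rw [h1, sub_smul, one_smul]; abel
  set ρB : ℝ := (specRad B).toReal with hρB
  have hρBs : ρB < s := ENNReal.toReal_lt_of_lt_ofReal hs
  have hρB0 : 0 ≤ ρB := ENNReal.toReal_nonneg
  by_cases hs1 : s ≤ 1
  · -- easy case
    have hQB : Q = B + (1 - s) • 1 := by
      rw [hB, sub_smul, sub_smul, one_smul]; abel
    have hle := specRad_add_smul_le B (1 - s) (by linarith) hfin
    rw [← hQB] at hle
    refine lt_of_le_of_lt hle ?_
    rw [show (1 : ℝ≥0∞) = ENNReal.ofReal 1 by simp]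
    exact ENNReal.ofReal_lt_ofReal_iff (by norm_num) |>.mpr (by linarith)
  · push_neg at hs1
    by_contra hcon
    push_neg at hcon
    set t : ℝ := s - 1 with ht
    have ht0 : 0 < t := by simp only [ht]; linarith
    -- lower bound : 1 ≤ matSum (Q ^ k) for all k
    have hkey : ∀ k : ℕ, (1 : ℝ) ≤ matSum (Q ^ k) := by
      intro k
      cases k with
      | zero =>
        rw [pow_zero]
        have : matSum (1 : Matrix ι ι ℝ) = (Fintype.card ι : ℝ) := by
          simp [matSum, Matrix.one_apply]
        rw [this]
        exact_mod_cast Fintype.card_pos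
      | succ n =>
        have h1 := one_le_norm_pow_of_one_le_specRad Q hcon n
        calc (1:ℝ) ≤ ‖(Q.map (algebraMap ℝ ℂ)) ^ (n+1)‖ := h1
          _ ≤ ∑ p, ∑ q, ‖((Q.map (algebraMap ℝ ℂ)) ^ (n+1)) p q‖ := norm_le_entrySum _
          _ = matSum (Q ^ (n+1)) := by
              rw [← map_pow_comm]
              exact entrySum_map _ (pow_entry_nonneg hQ0 (n+1))
    -- choose ρ'
    set ρ' : ℝ := (ρB + s) / 2 with hρ'
    have hρ'1 : ρB < ρ' := by simp only [hρ']; linarith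
    have hρ'2 : ρ' < s := by simp only [hρ']; linarith
    have hρ'0 : 0 < ρ' := by simp only [hρ']; linarith
    have hBrad : specRad B < ENNReal.ofReal ρ' := by
      have : specRad B = ENNReal.ofReal ρB := (ENNReal.ofReal_toReal hfin).symm
      rw [this]
      exact (ENNReal.ofReal_lt_ofReal_iff hρ'0).mpr hρ'1
    -- Gelfand eventual bound
    have hgel := spectrum.pow_nnnorm_pow_one_div_tendsto_nhds_spectralRadius
      (B.map (algebraMap ℝ ℂ))
    have hev1 : ∀ᶠ n : ℕ in atTop,
        (‖(B.map (algebraMap ℝ ℂ)) ^ n‖₊ : ℝ≥0∞) ^ (1 / n : ℝ) < ENNReal.ofReal ρ' :=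
      hgel.eventually_lt_const hBrad
    -- eventual strict inequality card * ρ'^n < s^n
    have hev2 : ∀ᶠ n : ℕ in atTop, (Fintype.card ι : ℝ) * ρ' ^ n < s ^ n := by
      have htd : Filter.Tendsto (fun n : ℕ => (Fintype.card ι : ℝ) * (ρ' / s) ^ n) atTop
          (𝓝 0) := by
        have h0 : Filter.Tendsto (fun n : ℕ => (ρ' / s) ^ n) atTop (𝓝 0) :=
          tendsto_pow_atTop_nhds_zero_of_lt_one (by positivity) (by
            rw [div_lt_one hs0]; exact hρ'2)
        simpa using h0.const_mul (Fintype.card ι : ℝ)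
      filter_upwards [htd.eventually_lt_const (by norm_num : (0:ℝ) < 1)] with n hn
      have hsn : (0:ℝ) < s ^ n := pow_pos hs0 n
      have : (Fintype.card ι : ℝ) * (ρ' ^ n / s ^ n) < 1 := by
        rwa [← div_pow]
      calc (Fintype.card ι : ℝ) * ρ' ^ n
          = ((Fintype.card ι : ℝ) * (ρ' ^ n / s ^ n)) * s ^ n := by
            field_simp
        _ < 1 * s ^ n := by exact mul_lt_mul_of_pos_right this hsn
        _ = s ^ n := one_mul _
    obtain ⟨n, hn1, hn2, hn3⟩ :=
      ((hev1.and (hev2.and (eventually_ge_atTop 1))).exists)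
    obtain ⟨hnB, hn⟩ := (⟨hn2, hn3⟩ : _ ∧ _)
    -- upper chain
    have hBn : ‖(B.map (algebraMap ℝ ℂ)) ^ n‖ ≤ ρ' ^ n :=
      norm_pow_le_of_gelfand _ ρ' hρ'0.le n hn hn1
    have hup : matSum (B ^ n) ≤ (Fintype.card ι : ℝ) * ρ' ^ n := by
      calc matSum (B ^ n) = ∑ p, ∑ q, ‖((B.map (algebraMap ℝ ℂ)) ^ n) p q‖ := by
            rw [← map_pow_comm]
            exact (entrySum_map _ (pow_entry_nonneg hB0 n)).symm
        _ ≤ (Fintype.card ι : ℝ) * ‖(B.map (algebraMap ℝ ℂ)) ^ n‖ := entrySum_le_card_norm _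
        _ ≤ (Fintype.card ι : ℝ) * ρ' ^ n := by
            exact mul_le_mul_of_nonneg_left hBn (by positivity)
    -- lower chain
    have hlow : s ^ n ≤ matSum (B ^ n) := by
      have hexp := matSum_pow_expand Q t n
      rw [← hB] at hexp
      rw [hexp]
      have hsum : s ^ n = ∑ k ∈ Finset.range (n + 1), (n.choose k : ℝ) * t ^ (n - k) := by
        have : s = 1 + t := by simp only [ht]; ring
        rw [this, add_pow]
        exact Finset.sum_congr rfl fun k _ => by ring
      rw [hsum]
      refine Finset.sum_le_sum fun k _ => ?_
      have h1 : (0:ℝ) ≤ (n.choose k : ℝ) * t ^ (n - k) := by positivity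
      calc (n.choose k : ℝ) * t ^ (n - k) = (n.choose k : ℝ) * t ^ (n - k) * 1 := by ring
        _ ≤ (n.choose k : ℝ) * t ^ (n - k) * matSum (Q ^ k) :=
            mul_le_mul_of_nonneg_left (hkey k) h1
    linarith [lt_of_le_of_lt (hlow.trans hup) hnB]

end SpectralCore

section OrderConv
variable {ι : Type*} [Fintype ι] [DecidableEq ι] [Nonempty ι]

lemma entry_tendsto_zero (Q : Matrix ι ι ℝ) (hlt : specRad Q < 1) (p q : ι) :
    Tendsto (fun n => (Q ^ n) p q) atTop (𝓝 0) := by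
  set ρ : ℝ := ((specRad Q).toReal + 1) / 2 with hρdef
  have hfin : specRad Q ≠ ⊤ := hlt.ne_top
  have hρ1 : (specRad Q).toReal < 1 := by
    have h' : specRad Q < ENNReal.ofReal 1 := by simpa [ENNReal.ofReal_one] using hlt
    exact ENNReal.toReal_lt_of_lt_ofReal h'
  have hρ0 : 0 ≤ (specRad Q).toReal := ENNReal.toReal_nonneg
  have h1 : (specRad Q).toReal < ρ := by rw [hρdef]; linarith
  have h2 : ρ < 1 := by rw [hρdef]; linarith
  have h3 : 0 < ρ := by rw [hρdef]; linarith
  have hrad : specRad Q < ENNReal.ofReal ρ := by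
    have : specRad Q = ENNReal.ofReal (specRad Q).toReal := (ENNReal.ofReal_toReal hfin).symm
    rw [this]
    exact (ENNReal.ofReal_lt_ofReal_iff h3).mpr h1
  have hgel := spectrum.pow_nnnorm_pow_one_div_tendsto_nhds_spectralRadius
    (Q.map (algebraMap ℝ ℂ))
  have hev : ∀ᶠ n : ℕ in atTop, |(Q ^ n) p q| ≤ ρ ^ n := by
    filter_upwards [hgel.eventually_lt_const hrad, eventually_ge_atTop 1] with n h1' hn1
    have hBn : ‖(Q.map (algebraMap ℝ ℂ)) ^ n‖ ≤ ρ ^ n :=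
      norm_pow_le_of_gelfand _ ρ h3.le n hn1 h1'
    have hentry : |(Q ^ n) p q| = ‖((Q.map (algebraMap ℝ ℂ)) ^ n) p q‖ := by
      rw [← map_pow_comm]
      simp [Matrix.map_apply, Complex.coe_algebraMap, Complex.norm_real, Real.norm_eq_abs]
    rw [hentry]
    exact (entry_norm_le _ p q).trans hBn
  have hpow : Tendsto (fun n : ℕ => ρ ^ n) atTop (𝓝 0) :=
    tendsto_pow_atTop_nhds_zero_of_lt_one h3.le h2
  exact squeeze_zero_norm' (by simpa [Real.norm_eq_abs] using hev) hpow

lemma mulVec_entry_tendsto_zero (Q : Matrix ι ι ℝ) (hlt : specRad Q < 1) (u : ι → ℝ) (p : ι) :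
    Tendsto (fun n => ((Q ^ n) *ᵥ u) p) atTop (𝓝 0) := by
  have : ∀ n, ((Q ^ n) *ᵥ u) p = ∑ q, (Q ^ n) p q * u q := fun n => rfl
  simp only [this]
  have h0 : (0 : ℝ) = ∑ _q : ι, 0 := by simp
  rw [h0]
  exact tendsto_finset_sum _ fun q _ => by
    simpa using (entry_tendsto_zero Q hlt p q).mul_const (u q)

lemma mulVec_mono {P : Matrix ι ι ℝ} (hP : ∀ p q, 0 ≤ P p q) {u v : ι → ℝ}
    (huv : ∀ q, u q ≤ v q) : ∀ p, (P *ᵥ u) p ≤ (P *ᵥ v) p := fun p =>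
  Finset.sum_le_sum fun q _ => mul_le_mul_of_nonneg_left (huv q) (hP p q)

lemma pow_le_pow_entry {P Q : Matrix ι ι ℝ} (hP : ∀ p q, 0 ≤ P p q)
    (hPQ : ∀ p q, P p q ≤ Q p q) (n : ℕ) : ∀ p q, (P ^ n) p q ≤ (Q ^ n) p q := by
  induction n with
  | zero => intro p q; rw [pow_zero, pow_zero]
  | succ n ih =>
    intro p q
    rw [pow_succ, pow_succ, Matrix.mul_apply, Matrix.mul_apply]
    refine Finset.sum_le_sum fun k _ => ?_
    exact mul_le_mul (ih p k) (hPQ k q) (hP k q) (le_trans (pow_entry_nonneg hP n p k) (ih p k))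

lemma nonneg_of_le_self_mulVec {P Qm : Matrix ι ι ℝ} (hP0 : ∀ p q, 0 ≤ P p q)
    (hPQ : ∀ p q, P p q ≤ Qm p q) (hQrad : specRad Qm < 1)
    (e : ι → ℝ) (he : ∀ p, (P *ᵥ e) p ≤ e p) : ∀ p, 0 ≤ e p := by
  have hQ0 : ∀ p q, 0 ≤ Qm p q := fun p q => le_trans (hP0 p q) (hPQ p q)
  -- e ≥ P^n e
  have hiter : ∀ n p, ((P ^ n) *ᵥ e) p ≤ e p := by
    intro n
    induction n with
    | zero => intro p; simp [Matrix.one_mulVec]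
    | succ n ih =>
      intro p
      have h1 : ((P ^ (n+1)) *ᵥ e) p = ((P ^ n) *ᵥ (P *ᵥ e)) p := by
        rw [Matrix.mulVec_mulVec, ← pow_succ]
      rw [h1]
      exact le_trans (mulVec_mono (pow_entry_nonneg hP0 n) he p) (ih p)
  -- lower bound by -(Qm^n |e|)
  have habs : ∀ n p, -(((Qm ^ n) *ᵥ (fun q => |e q|)) p) ≤ ((P ^ n) *ᵥ e) p := by
    intro n p
    have h1 : |((P ^ n) *ᵥ e) p| ≤ ((Qm ^ n) *ᵥ (fun q => |e q|)) p := by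
      calc |((P ^ n) *ᵥ e) p| = |∑ q, (P ^ n) p q * e q| := rfl
        _ ≤ ∑ q, |(P ^ n) p q * e q| := Finset.abs_sum_le_sum_abs _ _
        _ ≤ ∑ q, (Qm ^ n) p q * |e q| := by
            refine Finset.sum_le_sum fun q _ => ?_
            rw [abs_mul, abs_of_nonneg (pow_entry_nonneg hP0 n p q)]
            exact mul_le_mul_of_nonneg_right (pow_le_pow_entry hP0 hPQ n p q) (abs_nonneg _)
        _ = ((Qm ^ n) *ᵥ (fun q => |e q|)) p := rfl
    linarith [neg_abs_le (((P ^ n) *ᵥ e) p), abs_le.mp h1]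
  intro p
  have ht : Tendsto (fun n => -(((Qm ^ n) *ᵥ (fun q => |e q|)) p)) atTop (𝓝 0) := by
    simpa using (mulVec_entry_tendsto_zero Qm hQrad (fun q => |e q|) p).neg
  exact le_of_tendsto' ht fun n => le_trans (habs n p) (hiter n p)

end OrderConv

section VecMat
variable {m' : ℕ} [Nonempty (Fin m')]

lemma kron_mulVec (Am C W : Matrix (Fin m') (Fin m') ℝ) (p : Fin m' × Fin m') :
    ((Amᵀ ⊗ₖ C) *ᵥ (fun q : Fin m' × Fin m' => W q.2 q.1)) p = (C * W * Am) p.2 p.1 := by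
  simp only [Matrix.mulVec, dotProduct, Fintype.sum_prod_type, Matrix.kroneckerMap_apply,
    Matrix.transpose_apply, Matrix.mul_apply, Finset.sum_mul, Finset.mul_sum]
  refine Finset.sum_congr rfl fun q1 _ => ?_
  refine Finset.sum_congr rfl fun q2 _ => ?_
  ring

lemma sum_mulVec' {α : Type*} {ι : Type*} [Fintype ι] (s : Finset α)
    (f : α → Matrix ι ι ℝ) (v : ι → ℝ) (p : ι) :
    ((∑ k ∈ s, f k) *ᵥ v) p = ∑ k ∈ s, ((f k) *ᵥ v) p := by
  simp only [Matrix.mulVec, dotProduct, Matrix.sum_apply, Finset.sum_mul]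
  exact Finset.sum_comm

lemma mul_le_mul_entry {A A' B B' : Matrix (Fin m') (Fin m') ℝ}
    (hA0 : ∀ i j, 0 ≤ A i j) (hB0 : ∀ i j, 0 ≤ B i j)
    (hAA : ∀ i j, A i j ≤ A' i j) (hBB : ∀ i j, B i j ≤ B' i j) :
    ∀ i j, (A * B) i j ≤ (A' * B') i j := by
  intro i j
  rw [Matrix.mul_apply, Matrix.mul_apply]
  refine Finset.sum_le_sum fun k _ => ?_
  exact mul_le_mul (hAA i k) (hBB k j) (hB0 k j) (le_trans (hA0 i k) (hAA i k))

lemma telescope_ineq (G X Z : Matrix (Fin m') (Fin m') ℝ)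
    (hZ0 : ∀ i j, 0 ≤ Z i j) (hZX : ∀ i j, Z i j ≤ X i j)
    (hXG : ∀ i j, X i j ≤ G i j) (v : ℕ) :
    ∀ i j, (∑ k ∈ Finset.range v, Z ^ k * (G - X) * Z ^ (v - 1 - k)) i j
      ≤ (G ^ v - X ^ v) i j := by
  have hD0 : ∀ i j, 0 ≤ (G - X) i j := fun i j => by
    rw [Matrix.sub_apply]; linarith [hXG i j]
  have hterm0 : ∀ a b : ℕ, ∀ i j, 0 ≤ (Z ^ a * (G - X) * Z ^ b) i j := fun a b =>
    mul_entry_nonneg (mul_entry_nonneg (pow_entry_nonneg hZ0 a) hD0) (pow_entry_nonneg hZ0 b)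
  induction v with
  | zero => intro i j; simp
  | succ v ih =>
    intro i j
    have hsplit : (∑ k ∈ Finset.range (v + 1), Z ^ k * (G - X) * Z ^ (v + 1 - 1 - k))
        = Z * (∑ k ∈ Finset.range v, Z ^ k * (G - X) * Z ^ (v - 1 - k)) + (G - X) * Z ^ v := by
      rw [Finset.sum_range_succ']
      have h0 : Z ^ 0 * (G - X) * Z ^ (v + 1 - 1 - 0) = (G - X) * Z ^ v := by
        simp
      rw [h0, Finset.mul_sum]
      congr 1
      refine Finset.sum_congr rfl fun k hk => ?_
      have he : v + 1 - 1 - (k + 1) = v - 1 - k := by omega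
      rw [he, pow_succ', mul_assoc, mul_assoc, mul_assoc]
    have hrec : G ^ (v + 1) - X ^ (v + 1)
        = X * (G ^ v - X ^ v) + (G - X) * G ^ v := by
      rw [mul_sub, sub_mul, ← pow_succ', ← pow_succ']
      abel
    rw [hsplit, hrec, Matrix.add_apply, Matrix.add_apply]
    have hS0 : ∀ i j, 0 ≤ (∑ k ∈ Finset.range v, Z ^ k * (G - X) * Z ^ (v - 1 - k)) i j := by
      intro i j
      rw [Matrix.sum_apply]
      exact Finset.sum_nonneg fun k _ => hterm0 k (v - 1 - k) i j
    have h1 : (Z * (∑ k ∈ Finset.range v, Z ^ k * (G - X) * Z ^ (v - 1 - k))) i j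
        ≤ (X * (G ^ v - X ^ v)) i j :=
      mul_le_mul_entry hZ0 hS0 hZX ih i j
    have h2 : ((G - X) * Z ^ v) i j ≤ ((G - X) * G ^ v) i j :=
      mul_le_mul_entry hD0 (pow_entry_nonneg hZ0 v) (fun _ _ => le_rfl)
        (pow_le_pow_entry hZ0 (fun a b => le_trans (hZX a b) (hXG a b)) v) i j
    linarith

end VecMat

end AuxiliaryLemmas

theorem stmt7 (m N : ℕ) (hm : 1 ≤ m) (hN : 1 ≤ N)
    (A : ℕ → Matrix (Fin m) (Fin m) ℝ)
    (hA : ∀ v, v ≤ N → ∀ i j, 0 ≤ A v i j)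
    (G : Matrix (Fin m) (Fin m) ℝ)
    (hG0 : ∀ i j, 0 ≤ G i j)
    (hGsol : ∑ v ∈ Finset.range (N + 1), A v * G ^ v = G)
    (hGmin : ∀ S : Matrix (Fin m) (Fin m) ℝ, (∀ i j, 0 ≤ S i j) →
      ∑ v ∈ Finset.range (N + 1), A v * S ^ v = S → ∀ i j, G i j ≤ S i j)
    (X : Matrix (Fin m) (Fin m) ℝ)
    (hGX : ∀ i j, 0 ≤ (∑ v ∈ Finset.range (N + 1), A v * X ^ v - X) i j)
    (hX0 : ∀ i j, 0 ≤ X i j) (hXG : ∀ i j, X i j ≤ G i j)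
    (hMX : IsNonsingMMatrix
      ((1 : Matrix (Fin m × Fin m) (Fin m × Fin m) ℝ) -
      ∑ v ∈ Finset.Icc 1 N, ∑ j ∈ Finset.range v,
        (X ^ (v - 1 - j))ᵀ ⊗ₖ (A v * X ^ j)))
    (Z : Matrix (Fin m) (Fin m) ℝ)
    (hZ0 : ∀ i j, 0 ≤ Z i j) (hZX : ∀ i j, Z i j ≤ X i j)
    (Y : Matrix (Fin m) (Fin m) ℝ)
    (hY : ∑ v ∈ Finset.Icc 1 N, ∑ j ∈ Finset.range v,
        A v * Z ^ j * (Y - X) * Z ^ (v - 1 - j) - (Y - X) =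
      -(∑ v ∈ Finset.range (N + 1), A v * X ^ v - X)) :
    (∀ i j, 0 ≤ X i j) ∧ (∀ i j, X i j ≤ Y i j) ∧ (∀ i j, Y i j ≤ G i j) := by

  haveI : NeZero m := ⟨by omega⟩
  haveI hne : Nonempty (Fin m) := ⟨⟨0, hm⟩⟩
  -- abbreviations
  set GX : Matrix (Fin m) (Fin m) ℝ := ∑ v ∈ Finset.range (N + 1), A v * X ^ v - X with hGXdef
  set Kz : Matrix (Fin m × Fin m) (Fin m × Fin m) ℝ :=
    ∑ v ∈ Finset.Icc 1 N, ∑ j ∈ Finset.range v, (Z ^ (v - 1 - j))ᵀ ⊗ₖ (A v * Z ^ j)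
    with hKzdef
  set Kx : Matrix (Fin m × Fin m) (Fin m × Fin m) ℝ :=
    ∑ v ∈ Finset.Icc 1 N, ∑ j ∈ Finset.range v, (X ^ (v - 1 - j))ᵀ ⊗ₖ (A v * X ^ j)
    with hKxdef
  -- vec action of Kz
  have hvec : ∀ (W : Matrix (Fin m) (Fin m) ℝ) (p : Fin m × Fin m),
      (Kz *ᵥ (fun q => W q.2 q.1)) p
        = (∑ v ∈ Finset.Icc 1 N, ∑ j ∈ Finset.range v,
            A v * Z ^ j * W * Z ^ (v - 1 - j)) p.2 p.1 := by
    intro W p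
    rw [hKzdef, sum_mulVec', Matrix.sum_apply]
    refine Finset.sum_congr rfl fun v hv => ?_
    rw [sum_mulVec', Matrix.sum_apply]
    exact Finset.sum_congr rfl fun j hj => kron_mulVec _ _ _ _
  -- entry descriptions of Kz, Kx
  have hKz0 : ∀ p q, 0 ≤ Kz p q := by
    intro p q
    rw [hKzdef, Matrix.sum_apply]
    refine Finset.sum_nonneg fun v hv => ?_
    rw [Matrix.sum_apply]
    refine Finset.sum_nonneg fun j hj => ?_
    have hvN : v ≤ N := (Finset.mem_Icc.mp hv).2
    rw [Matrix.kroneckerMap_apply, Matrix.transpose_apply]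
    exact mul_nonneg (pow_entry_nonneg hZ0 _ _ _)
      (mul_entry_nonneg (hA v hvN) (pow_entry_nonneg hZ0 j) _ _)
  have hKx0 : ∀ p q, 0 ≤ Kx p q := by
    intro p q
    rw [hKxdef, Matrix.sum_apply]
    refine Finset.sum_nonneg fun v hv => ?_
    rw [Matrix.sum_apply]
    refine Finset.sum_nonneg fun j hj => ?_
    have hvN : v ≤ N := (Finset.mem_Icc.mp hv).2
    rw [Matrix.kroneckerMap_apply, Matrix.transpose_apply]
    exact mul_nonneg (pow_entry_nonneg hX0 _ _ _)
      (mul_entry_nonneg (hA v hvN) (pow_entry_nonneg hX0 j) _ _)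
  have hKzx : ∀ p q, Kz p q ≤ Kx p q := by
    intro p q
    rw [hKzdef, hKxdef, Matrix.sum_apply, Matrix.sum_apply]
    refine Finset.sum_le_sum fun v hv => ?_
    rw [Matrix.sum_apply, Matrix.sum_apply]
    refine Finset.sum_le_sum fun j hj => ?_
    have hvN : v ≤ N := (Finset.mem_Icc.mp hv).2
    rw [Matrix.kroneckerMap_apply, Matrix.kroneckerMap_apply, Matrix.transpose_apply,
      Matrix.transpose_apply]
    refine mul_le_mul (pow_le_pow_entry hZ0 hZX _ _ _)
      (mul_le_mul_entry (hA v hvN) (pow_entry_nonneg hZ0 j) (fun _ _ => le_rfl)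
        (pow_le_pow_entry hZ0 hZX j) _ _)
      (mul_entry_nonneg (hA v hvN) (pow_entry_nonneg hZ0 j) _ _)
      (pow_entry_nonneg hX0 _ _ _)
  -- spectral radius of Kx
  obtain ⟨hZmat, s, B, hB0, hEqM, hsB⟩ := hMX
  have hrad : specRad Kx < 1 := specRad_lt_one Kx hKx0 s B hB0 hEqM hsB
  -- the equation for w = vec (Y - X)
  have hYid : (∑ v ∈ Finset.Icc 1 N, ∑ j ∈ Finset.range v,
      A v * Z ^ j * (Y - X) * Z ^ (v - 1 - j)) + GX = Y - X := by
    rw [sub_eq_iff_eq_add] at hY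
    rw [hY]; abel
  have hw : ∀ p : Fin m × Fin m,
      (Kz *ᵥ (fun q => (Y - X) q.2 q.1)) p + GX p.2 p.1 = (Y - X) p.2 p.1 := by
    intro p
    rw [hvec]
    have h := congrArg (fun M : Matrix (Fin m) (Fin m) ℝ => M p.2 p.1) hYid
    simpa [Matrix.add_apply] using h
  have hc0 : ∀ p : Fin m × Fin m, 0 ≤ GX p.2 p.1 := fun p => hGX _ _
  -- X ≤ Y
  have hwpos : ∀ p : Fin m × Fin m, 0 ≤ (Y - X) p.2 p.1 := by
    have := nonneg_of_le_self_mulVec hKz0 hKzx hrad (fun q => (Y - X) q.2 q.1)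
      (fun p => by have h1 := hw p; have h2 := hc0 p; linarith)
    exact this
  have hXY : ∀ i j, X i j ≤ Y i j := by
    intro i j
    have := hwpos (j, i)
    simp only [Matrix.sub_apply] at this
    linarith
  -- the inequality for d = vec (G - X)
  have hid : (∑ v ∈ Finset.range (N + 1), A v * (G ^ v - X ^ v)) + GX = G - X := by
    have h1 : (∑ v ∈ Finset.range (N + 1), A v * (G ^ v - X ^ v))
        = (∑ v ∈ Finset.range (N + 1), A v * G ^ v)
          - (∑ v ∈ Finset.range (N + 1), A v * X ^ v) := by
      rw [← Finset.sum_sub_distrib]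
      exact Finset.sum_congr rfl fun v _ => mul_sub _ _ _
    rw [h1, hGsol, hGXdef]; abel
  have hdmat : ∀ i j, (∑ v ∈ Finset.Icc 1 N, ∑ j' ∈ Finset.range v,
      A v * Z ^ j' * (G - X) * Z ^ (v - 1 - j')) i j + GX i j ≤ (G - X) i j := by
    intro i j
    have hle : ∀ v ∈ Finset.Icc 1 N,
        (∑ j' ∈ Finset.range v, A v * Z ^ j' * (G - X) * Z ^ (v - 1 - j')) i j
          ≤ (A v * (G ^ v - X ^ v)) i j := by
      intro v hv
      have hvN : v ≤ N := (Finset.mem_Icc.mp hv).2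
      have hSle := telescope_ineq G X Z hZ0 hZX hXG v
      have hD0 : ∀ a b, 0 ≤ (G - X) a b := fun a b => by
        rw [Matrix.sub_apply]; linarith [hXG a b]
      have hS0 : ∀ a b, 0 ≤ (∑ k ∈ Finset.range v, Z ^ k * (G - X) * Z ^ (v - 1 - k)) a b := by
        intro a b
        rw [Matrix.sum_apply]
        exact Finset.sum_nonneg fun k _ => mul_entry_nonneg
          (mul_entry_nonneg (pow_entry_nonneg hZ0 k) hD0) (pow_entry_nonneg hZ0 _) a b
      have h2 : (A v * ∑ k ∈ Finset.range v, Z ^ k * (G - X) * Z ^ (v - 1 - k)) i j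
          ≤ (A v * (G ^ v - X ^ v)) i j :=
        mul_le_mul_entry (hA v hvN) hS0 (fun _ _ => le_rfl) hSle i j
      have h3 : A v * ∑ k ∈ Finset.range v, Z ^ k * (G - X) * Z ^ (v - 1 - k)
          = ∑ k ∈ Finset.range v, A v * Z ^ k * (G - X) * Z ^ (v - 1 - k) := by
        rw [Finset.mul_sum]
        exact Finset.sum_congr rfl fun k _ => by rw [← mul_assoc, ← mul_assoc]
      rwa [h3] at h2
    have hsum1 : (∑ v ∈ Finset.Icc 1 N, ∑ j' ∈ Finset.range v,
        A v * Z ^ j' * (G - X) * Z ^ (v - 1 - j')) i j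
          ≤ (∑ v ∈ Finset.Icc 1 N, A v * (G ^ v - X ^ v)) i j := by
      rw [Matrix.sum_apply, Matrix.sum_apply]
      exact Finset.sum_le_sum hle
    have hsum2 : (∑ v ∈ Finset.Icc 1 N, A v * (G ^ v - X ^ v))
        = ∑ v ∈ Finset.range (N + 1), A v * (G ^ v - X ^ v) := by
      have hins : Finset.range (N + 1) = insert 0 (Finset.Icc 1 N) := by
        ext x
        simp only [Finset.mem_range, Finset.mem_insert, Finset.mem_Icc]
        omega
      rw [hins, Finset.sum_insert (by simp)]
      simp
    have hfin := congrArg (fun M : Matrix (Fin m) (Fin m) ℝ => M i j) hid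
    simp only [Matrix.add_apply] at hfin
    rw [hsum2] at hsum1
    linarith
  have hd : ∀ p : Fin m × Fin m,
      (Kz *ᵥ (fun q => (G - X) q.2 q.1)) p + GX p.2 p.1 ≤ (G - X) p.2 p.1 := by
    intro p
    rw [hvec]
    exact hdmat p.2 p.1
  -- e = vec (G - Y)
  have hGYle : ∀ p : Fin m × Fin m,
      (Kz *ᵥ (fun q => (G - Y) q.2 q.1)) p ≤ (G - Y) p.2 p.1 := by
    intro p
    have hsplit : (fun q : Fin m × Fin m => (G - Y) q.2 q.1)
        = (fun q : Fin m × Fin m => (G - X) q.2 q.1) - (fun q => (Y - X) q.2 q.1) := by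
      funext q
      simp only [Pi.sub_apply, Matrix.sub_apply]
      ring
    rw [hsplit, Matrix.mulVec_sub]
    have h1 := hd p
    have h2 := hw p
    simp only [Pi.sub_apply, Matrix.sub_apply] at *
    linarith
  have hepos := nonneg_of_le_self_mulVec hKz0 hKzx hrad (fun q => (G - Y) q.2 q.1) hGYle
  have hYG : ∀ i j, Y i j ≤ G i j := by
    intro i j
    have := hepos (j, i)
    simp only [Matrix.sub_apply] at this
    linarith
  exact ⟨hX0, hXY, hYG⟩
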